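/- Fix s ∈ ℝ and an integer n ≥ 1. Let uⁿ(x,t) = (2/3) n^{−1} + n^{−s} cos(nx − t) and gₙ(x,t) = −(n^{1−s}/(1 + n²)) sin(nx − t). Then: (a) gₙ(x,t) − ∂_x² gₙ(x,t) = ∂_x uⁿ(x,t) for all (x,t); and (b) the residue Rₙ := ∂_t uⁿ + (3/2) uⁿ ∂_x uⁿ − gₙ satisfies Rₙ(x,t) = −(3/4) n^{1−2s} sin(2(nx − t)) + (n^{1−s}/(1 + n²)) sin(nx − t), and hence |Rₙ(x,t)| ≤ (3/4) n^{1−2s} + n^{1−s}/(1 + n²) for all (x,t) ∈ ℝ². -/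
import Mathlib

private lemma theta_hasDerivAt_x (N t : ℝ) (x : ℝ) :
    HasDerivAt (fun x' : ℝ => N * x' - t) N x := by
  simpa using ((hasDerivAt_id x).const_mul N).sub_const t

private lemma theta_hasDerivAt_t (N x : ℝ) (t : ℝ) :
    HasDerivAt (fun t' : ℝ => N * x - t') (-1) t := by
  simpa using (hasDerivAt_id t).const_sub (N * x)

private lemma u_deriv_x (N a t : ℝ) (x : ℝ) :
    HasDerivAt (fun x' : ℝ => (2/3) * N⁻¹ + a * Real.cos (N * x' - t))
      (a * (-Real.sin (N * x - t) * N)) x := by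
  have h := ((Real.hasDerivAt_cos (N * x - t)).comp x (theta_hasDerivAt_x N t x))
  exact (h.const_mul a).const_add _

private lemma u_deriv_t (N a x : ℝ) (t : ℝ) :
    HasDerivAt (fun t' : ℝ => (2/3) * N⁻¹ + a * Real.cos (N * x - t'))
      (a * (-Real.sin (N * x - t) * (-1))) t := by
  have h := ((Real.hasDerivAt_cos (N * x - t)).comp t (theta_hasDerivAt_t N x t))
  exact (h.const_mul a).const_add _

private lemma g_deriv_x (N c t : ℝ) (x : ℝ) :
    HasDerivAt (fun x' : ℝ => -c * Real.sin (N * x' - t))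
      (-c * (Real.cos (N * x - t) * N)) x := by
  have h := ((Real.hasDerivAt_sin (N * x - t)).comp x (theta_hasDerivAt_x N t x))
  exact h.const_mul (-c)

private lemma g_deriv2_x (N c t : ℝ) (x : ℝ) :
    HasDerivAt (fun x' : ℝ => -c * (Real.cos (N * x' - t) * N))
      (-c * (-Real.sin (N * x - t) * N * N)) x := by
  have h := ((Real.hasDerivAt_cos (N * x - t)).comp x (theta_hasDerivAt_x N t x))
  simpa [mul_comm, mul_assoc, mul_left_comm] using (h.mul_const N).const_mul (-c)

/-- The nonlocal part `(1 - ∂_x²)^{-1}∂_x uⁿ` of the approximate solution is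
`gₙ(x,t) = -(n^{1-s}/(1+n²)) sin(nx - t)`, and the full residue of `uⁿ` is identified
and bounded pointwise. -/
theorem approx_solution_full_residue (s : ℝ) (n : ℕ) (hn : 1 ≤ n) :
    let u : ℝ → ℝ → ℝ := fun x t => (2/3) * (n:ℝ)⁻¹ + (n:ℝ)^(-s) * Real.cos (n*x - t)
    let g : ℝ → ℝ → ℝ := fun x t => -((n:ℝ)^(1-s) / (1 + (n:ℝ)^2)) * Real.sin (n*x - t)
    let R : ℝ → ℝ → ℝ := fun x t =>
      deriv (fun t' => u x t') t + (3/2) * u x t * deriv (fun x' => u x' t) x - g x t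
    (∀ x t : ℝ, g x t - iteratedDeriv 2 (fun x' => g x' t) x = deriv (fun x' => u x' t) x) ∧
    (∀ x t : ℝ, R x t = -(3/4) * (n:ℝ)^(1-2*s) * Real.sin (2*(n*x - t))
        + ((n:ℝ)^(1-s) / (1 + (n:ℝ)^2)) * Real.sin (n*x - t)) ∧
    (∀ x t : ℝ, |R x t| ≤ (3/4) * (n:ℝ)^(1-2*s) + (n:ℝ)^(1-s) / (1 + (n:ℝ)^2)) := by
  intro u g R
  set N : ℝ := (n : ℝ) with hNdef
  have hN : 0 < N := by rw [hNdef]; exact_mod_cast Nat.lt_of_lt_of_le Nat.zero_lt_one hn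
  have hNne : N ≠ 0 := hN.ne'
  have hden : (1 : ℝ) + N ^ 2 ≠ 0 := by positivity
  set c : ℝ := N ^ (1 - s) / (1 + N ^ 2) with hc
  -- powers
  have e1 : N ^ (1 - s) = N * N ^ (-s) := by
    rw [show (1 : ℝ) - s = 1 + (-s) by ring, Real.rpow_add hN, Real.rpow_one]
  have e2 : N ^ (1 - 2 * s) = N * (N ^ (-s) * N ^ (-s)) := by
    rw [show (1 : ℝ) - 2 * s = 1 + (-s) + (-s) by ring, Real.rpow_add hN,
      Real.rpow_add hN, Real.rpow_one, mul_assoc]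
  -- derivative values
  have hdx : ∀ x t : ℝ, deriv (fun x' => u x' t) x
      = N ^ (-s) * (-Real.sin (N * x - t) * N) := fun x t => (u_deriv_x N _ t x).deriv
  have hdt : ∀ x t : ℝ, deriv (fun t' => u x t') t
      = N ^ (-s) * (-Real.sin (N * x - t) * (-1)) := fun x t => (u_deriv_t N _ x t).deriv
  have hgxx : ∀ x t : ℝ, iteratedDeriv 2 (fun x' => g x' t) x
      = -c * (-Real.sin (N * x - t) * N * N) := by
    intro x t
    have h1 : deriv (fun x' => g x' t) = fun x' => -c * (Real.cos (N * x' - t) * N) := by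
      funext y; exact (g_deriv_x N c t y).deriv
    rw [show (2 : ℕ) = 1 + 1 from rfl, iteratedDeriv_succ, iteratedDeriv_one, h1]
    exact (g_deriv2_x N c t x).deriv
  have hR : ∀ x t : ℝ, R x t = -(3/4) * N ^ (1 - 2*s) * Real.sin (2*(N*x - t))
      + c * Real.sin (N*x - t) := by
    intro x t
    show deriv (fun t' => u x t') t + (3/2) * u x t * deriv (fun x' => u x' t) x
        - (-c * Real.sin (N * x - t)) = _
    rw [hdx x t, hdt x t, Real.sin_two_mul, e2]
    show _ + (3/2) * ((2/3) * N⁻¹ + N ^ (-s) * Real.cos (N * x - t)) * _ - _ = _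
    field_simp
    ring
  have hpow2 : (0:ℝ) ≤ N ^ (1 - 2*s) := (Real.rpow_pos_of_pos hN _).le
  have hcpos : (0:ℝ) ≤ c := by
    rw [hc]; positivity
  refine ⟨?_, hR, ?_⟩
  · intro x t
    rw [hgxx x t, hdx x t]
    show -c * Real.sin (N * x - t) - _ = _
    rw [hc, e1]
    field_simp
    ring
  · intro x t
    rw [hR x t]
    calc |(-(3/4) * N ^ (1-2*s) * Real.sin (2*(N*x - t)) + c * Real.sin (N*x - t))|
        ≤ |(-(3/4) * N ^ (1-2*s) * Real.sin (2*(N*x - t)))| + |c * Real.sin (N*x - t)| :=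
          abs_add_le _ _
      _ = (3/4) * N ^ (1-2*s) * |Real.sin (2*(N*x - t))| + c * |Real.sin (N*x - t)| := by
          rw [abs_mul, abs_mul, abs_mul, abs_neg, abs_of_nonneg hpow2, abs_of_nonneg hcpos]
          norm_num
      _ ≤ (3/4) * N ^ (1-2*s) * 1 + c * 1 := by
          gcongr
          · exact Real.abs_sin_le_one _
          · exact Real.abs_sin_le_one _
      _ = (3/4) * N ^ (1-2*s) + c := by ring
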